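/- arXiv:1503.05118 — 2 statements merged into one kernel-verified Lean document; each statement's English description precedes it below -/
import Mathlib

section
/- Let Γ be a finite group acting linearly on ℝⁿ, let f : ℝⁿ → ℝⁿ be a smooth Γ-equivariant vector field, and let x : ℝ → ℝⁿ be a nonconstant periodic solution of ẋ = f(x) with group of spatial symmetries K and group of spatio-temporal symmetries H. Then K is a normal subgroup of H and the quotient group H/K is cyclic. -/
set_option maxHeartbeats 1000000
open Set Filter Topology

/-- Global uniqueness for autonomous C¹ ODEs on ℝ. -/
lemma ode_unique_global {E : Type*} [NormedAddCommGroup E] [NormedSpace ℝ E]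
    {f : E → E} (hf : ContDiff ℝ 1 f) {y z : ℝ → E}
    (hy : ∀ t, HasDerivAt y (f (y t)) t) (hz : ∀ t, HasDerivAt z (f (z t)) t)
    {t₀ : ℝ} (h0 : y t₀ = z t₀) : y = z := by
  have hyc : Continuous y := continuous_iff_continuousAt.mpr fun t => (hy t).continuousAt
  have hzc : Continuous z := continuous_iff_continuousAt.mpr fun t => (hz t).continuousAt
  have hclopen : IsClopen {t | y t = z t} := by
    constructor
    · exact isClosed_eq hyc hzc
    · rw [isOpen_iff_mem_nhds]
      intro t₁ ht₁
      have ht₁' : y t₁ = z t₁ := ht₁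
      obtain ⟨L, s, hs, hlip⟩ := (hf.contDiffAt (x := y t₁)).exists_lipschitzOnWith
      have hev : y =ᶠ[𝓝 t₁] z := by
        refine ODE_solution_unique_of_eventually (v := fun _ => f) (s := fun _ => s)
          (Filter.Eventually.of_forall fun _ => hlip) ?_ ?_ ht₁'
        · filter_upwards [hyc.continuousAt.preimage_mem_nhds hs] with t ht
          exact ⟨hy t, ht⟩
        · filter_upwards [hzc.continuousAt.preimage_mem_nhds (ht₁' ▸ hs)] with t ht
          exact ⟨hz t, ht⟩
      exact hev
  have : {t | y t = z t} = univ := hclopen.eq_univ ⟨t₀, h0⟩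
  funext t
  exact (this ▸ mem_univ t : t ∈ {t | y t = z t})

/-- For a nonconstant periodic solution of a smooth `Γ`-equivariant ODE on `ℝⁿ`, with
spatial symmetry group `K` and spatio-temporal symmetry group `H`, the subgroup `K` is
normal in `H` and the quotient `H/K` is cyclic. -/
theorem spatial_normal_and_quotient_cyclic
    (n : ℕ) (Γ : Type*) [Group Γ] [Fintype Γ]
    (ρ : Representation ℝ Γ (Fin n → ℝ))
    (f : (Fin n → ℝ) → (Fin n → ℝ)) (hf : ContDiff ℝ (⊤ : ℕ∞) f)
    (hequiv : ∀ (γ : Γ) (v : Fin n → ℝ), f (ρ γ v) = ρ γ (f v))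
    (x : ℝ → (Fin n → ℝ)) (T : ℝ) (hT : 0 < T) (hper : Function.Periodic x T)
    (hnc : ¬ ∃ c : Fin n → ℝ, ∀ t : ℝ, x t = c)
    (hode : ∀ t : ℝ, HasDerivAt x (f (x t)) t)
    (K H : Subgroup Γ)
    (hK : (K : Set Γ) = {γ : Γ | ∀ t : ℝ, ρ γ (x t) = x t})
    (hH : (H : Set Γ) = {γ : Γ | ρ γ '' Set.range x = Set.range x}) :
    ∃ hN : (K.subgroupOf H).Normal,
      @IsCyclic _ (@ZPow.toPow _ (@DivInvMonoid.toZPow _ (@Group.toDivInvMonoid _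
        (@QuotientGroup.Quotient.group _ _ (K.subgroupOf H) hN)))) := by
  have hf1 : ContDiff ℝ 1 f := hf.of_le (by simp)
  have hxc : Continuous x := continuous_iff_continuousAt.mpr fun t => (hode t).continuousAt
  -- membership criteria
  have hKm : ∀ γ : Γ, γ ∈ K ↔ ∀ t, ρ γ (x t) = x t := fun γ => by
    have := Set.ext_iff.mp hK γ; simpa using this
  have hHm : ∀ γ : Γ, γ ∈ H ↔ ρ γ '' Set.range x = Set.range x := fun γ => by
    have := Set.ext_iff.mp hH γ; simpa using this
  -- each γ ∈ H acts on the orbit by a time shift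
  have hshift : ∀ γ ∈ H, ∃ s : ℝ, ∀ t, ρ γ (x t) = x (t + s) := by
    intro γ hγ
    have h0 : ρ γ (x 0) ∈ Set.range x := by
      rw [← (hHm γ).mp hγ]; exact ⟨x 0, ⟨0, rfl⟩, rfl⟩
    obtain ⟨s, hsx⟩ := h0
    have hy : ∀ t, HasDerivAt (fun τ => ρ γ (x τ)) (f (ρ γ (x t))) t := by
      intro t
      rw [hequiv]
      exact (ρ γ).toContinuousLinearMap.hasFDerivAt.comp_hasDerivAt t (hode t)
    have hz : ∀ t, HasDerivAt (fun τ => x (τ + s)) (f (x (t + s))) t := by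
      intro t
      have := (hode (t + s)).scomp t ((hasDerivAt_id t).add_const s)
      rw [one_smul] at this; exact this
    have heq := ode_unique_global hf1 hy hz (t₀ := 0) (by simpa using hsx.symm)
    exact ⟨s, fun t => congrFun heq t⟩
  -- the subgroup of periods
  set P : AddSubgroup ℝ :=
    { carrier := {p | ∀ t, x (t + p) = x t}
      zero_mem' := by intro t; simp
      add_mem' := by
        intro p q hp hq t
        have h : t + (p + q) = t + q + p := by ring
        rw [h, hp, hq]
      neg_mem' := by
        intro p hp t
        have h := hp (t + -p)
        rw [show t + -p + p = t by ring] at h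
        exact h.symm } with hPdef
  have hmemPdef : ∀ p : ℝ, p ∈ P ↔ ∀ t, x (t + p) = x t := fun p => Iff.rfl
  have hTP : T ∈ P := fun t => hper t
  have hPnotdense : ¬ Dense (P : Set ℝ) := by
    intro hd
    apply hnc
    refine ⟨x 0, fun t => ?_⟩
    have hsub : closure (P : Set ℝ) ⊆ {p | x p = x 0} := by
      apply closure_minimal
      · intro p hp
        have h := hp 0
        simpa using h
      · exact isClosed_eq hxc continuous_const
    exact hsub (by rw [hd.closure_eq]; trivial : t ∈ closure (P : Set ℝ))
  obtain ⟨a, hPa⟩ := (P.dense_or_cyclic).resolve_left hPnotdense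
  have ha0 : a ≠ 0 := by
    rintro rfl
    rw [hPa] at hTP
    simp [AddSubgroup.closure_singleton_zero] at hTP
    exact hT.ne' hTP
  have haC : (a : ℂ) ≠ 0 := Complex.ofReal_ne_zero.mpr ha0
  have hmemP : ∀ p : ℝ, p ∈ P ↔ ∃ k : ℤ, k • a = p := by
    intro p; rw [hPa, AddSubgroup.mem_closure_singleton]
  -- the phase exponential
  set e : ℝ → Circle := fun s => Circle.exp (s / a * (2 * Real.pi)) with hedef
  have hea : ∀ k : ℤ, e (k • a) = 1 := by
    intro k
    have h : ((k • a : ℝ)) / a = (k : ℝ) := by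
      rw [zsmul_eq_mul, mul_div_assoc, div_self ha0, mul_one]
    rw [hedef]; simp only []
    rw [h]
    exact Circle.exp_int_mul_two_pi k
  have hemul : ∀ s₁ s₂ : ℝ, e (s₁ + s₂) = e s₁ * e s₂ := by
    intro s₁ s₂
    rw [hedef]; simp only []
    rw [← Circle.exp_add]
    congr 1
    field_simp
  have heone : ∀ s : ℝ, e s = 1 → ∃ k : ℤ, k • a = s := by
    intro s hs
    rw [hedef] at hs; simp only [Circle.exp_eq_one] at hs
    obtain ⟨k, hk⟩ := hs
    refine ⟨k, ?_⟩
    have hpi : (2 * Real.pi) ≠ 0 := by positivity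
    have h3 : s / a = (k : ℝ) := mul_right_cancel₀ hpi hk
    have h5 : s = (k : ℝ) * a := by
      field_simp at h3
      linarith [h3]
    rw [zsmul_eq_mul, ← h5]
  -- phase differences lie in P
  have hdiff : ∀ s₁ s₂ : ℝ, (∀ t, x (t + s₁) = x (t + s₂)) → e s₁ = e s₂ := by
    intro s₁ s₂ h
    have hP : s₁ - s₂ ∈ P := by
      intro t
      have h' := h (t - s₂)
      rw [show t - s₂ + s₁ = t + (s₁ - s₂) by ring, show t - s₂ + s₂ = t by ring] at h'
      exact h'
    obtain ⟨k, hk⟩ := (hmemP _).mp hP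
    calc e s₁ = e ((s₁ - s₂) + s₂) := by ring_nf
      _ = e (s₁ - s₂) * e s₂ := hemul _ _
      _ = e s₂ := by rw [← hk, hea, one_mul]
  -- choose phases
  have hsall : ∀ γ : H, ∃ s : ℝ, ∀ t, ρ (γ : Γ) (x t) = x (t + s) := fun γ => hshift γ γ.2
  choose sh hsh using hsall
  -- Θ is a group hom
  have h1 : e (sh 1) = 1 := by
    have hh : ∀ t : ℝ, x (t + sh 1) = x (t + 0) := by
      intro t
      have h := hsh 1 t
      simp only [OneMemClass.coe_one, map_one, Module.End.one_apply] at h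
      rw [← h, add_zero]
    rw [hdiff _ _ hh]
    rw [hedef]; simp
  have hm : ∀ γ η : H, e (sh (γ * η)) = e (sh γ) * e (sh η) := by
    intro γ η
    have hh : ∀ t : ℝ, x (t + sh (γ * η)) = x (t + (sh η + sh γ)) := by
      intro t
      have h1' := hsh (γ * η) t
      have h2' : ρ ((γ * η : H) : Γ) (x t) = x (t + (sh η + sh γ)) := by
        rw [Subgroup.coe_mul, map_mul, Module.End.mul_apply, hsh η t, hsh γ (t + sh η),
          add_assoc]
      rw [← h1', h2']
    rw [hdiff _ _ hh, hemul, mul_comm]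
  obtain ⟨Θ, hker⟩ : ∃ Θ : H →* Circle, K.subgroupOf H = Θ.ker := by
    refine ⟨{ toFun := fun γ => e (sh γ), map_one' := h1, map_mul' := hm }, ?_⟩
    ext γ
    rw [Subgroup.mem_subgroupOf, MonoidHom.mem_ker, hKm]
    constructor
    · intro hfix
      have hP : sh γ ∈ P := by
        intro t
        rw [← hsh γ t, hfix t]
      obtain ⟨k, hk⟩ := (hmemP _).mp hP
      show e (sh γ) = 1
      rw [← hk, hea]
    · intro hone t
      obtain ⟨k, hk⟩ := heone _ hone
      have hP : sh γ ∈ P := (hmemP _).mpr ⟨k, hk⟩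
      rw [hsh γ t, hP t]
  haveI hN : (K.subgroupOf H).Normal := by rw [hker]; exact Θ.normal_ker
  refine ⟨hN, ?_⟩
  haveI : Finite (H ⧸ Θ.ker) := Quotient.finite _
  haveI hcyc : IsCyclic (H ⧸ Θ.ker) := by
    refine isCyclic_of_subgroup_isDomain (R := ℂ) (Circle.coeHom.comp (QuotientGroup.kerLift Θ)) ?_
    intro u v huv
    exact QuotientGroup.kerLift_injective Θ (Subtype.ext huv)
  exact isCyclic_of_surjective (QuotientGroup.quotientMulEquivOfEq hker.symm)
    (MulEquiv.surjective _)
end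

section
/- Let Γ be a finite cyclic group acting linearly on ℝⁿ and let x₀ ∈ ℝⁿ. Then there exists a Γ-equivariant polynomial vector field f : ℝⁿ → ℝⁿ such that f(x₀) = 0 and x₀ is a linearly stable equilibrium, i.e. every eigenvalue of the complexification of the Jacobian (df)_{x₀} has strictly negative real part. -/
/-!
Take `h v = -φ v • (v - x₀)` with `φ v = ∏ |v - y|²` over the points `y ≠ x₀` of the orbit of `x₀`.
Then `h` and `dh` vanish at every such `y`, while `dh(x₀) = -φ(x₀) • id`. The average
`f v = ∑ γ, ρ γ⁻¹ (h (ρ γ v))` is equivariant and polynomial and vanishes on the orbit; at `x₀` only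
the stabilizer of `x₀` contributes to `df`, each element by `-φ(x₀) • id`, so
`df(x₀) = -|Stab x₀| φ(x₀) • id` has a single, negative eigenvalue.
-/

open MvPolynomial Finset

section PolynomialMaps

variable {R σ τ υ : Type*} [CommRing R]

variable (R σ) in
noncomputable def mvPolynomialFunctions : Subalgebra R ((σ → R) → R) :=
  (aeval fun i (v : σ → R) => v i).range

theorem aeval_apply_eq_eval (x : τ → (σ → R) → R) (p : MvPolynomial τ R) (v : σ → R) :
    aeval x p v = eval (fun i => x i v) p := by
  induction p using MvPolynomial.induction_on <;> simp_all

theorem mem_mvPolynomialFunctions_iff {g : (σ → R) → R} :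
    g ∈ mvPolynomialFunctions R σ ↔ ∃ p : MvPolynomial σ R, aeval (fun i v => v i) p = g :=
  AlgHom.mem_range _

theorem coord_mem_mvPolynomialFunctions (i : σ) :
    (fun v : σ → R => v i) ∈ mvPolynomialFunctions R σ :=
  ⟨X i, aeval_X _ i⟩

theorem const_mem_mvPolynomialFunctions (c : R) :
    (fun _ : σ → R => c) ∈ mvPolynomialFunctions R σ :=
  (mvPolynomialFunctions R σ).algebraMap_mem c

theorem LinearMap.coe_mem_mvPolynomialFunctions [Fintype σ] (ℓ : (σ → R) →ₗ[R] R) :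
    ⇑ℓ ∈ mvPolynomialFunctions R σ := by
  classical
  have : ⇑ℓ = ∑ i, (fun _ => ℓ fun j => if i = j then 1 else 0) * fun v : σ → R => v i := by
    ext v; simp [ℓ.pi_apply_eq_sum_univ v, mul_comm]
  rw [this]
  exact sum_mem fun i _ =>
    mul_mem (const_mem_mvPolynomialFunctions _) (coord_mem_mvPolynomialFunctions i)

def IsPolynomialMap (f : (σ → R) → τ → R) : Prop :=
  ∀ i, (fun v => f v i) ∈ mvPolynomialFunctions R σ

theorem IsPolynomialMap.exists_mvPolynomial {f : (σ → R) → τ → R} (hf : IsPolynomialMap f) :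
    ∃ p : τ → MvPolynomial σ R, ∀ v i, f v i = eval v (p i) := by
  choose p hp using fun i => mem_mvPolynomialFunctions_iff.1 (hf i)
  exact ⟨p, fun v i => by rw [← congrFun (hp i) v, aeval_apply_eq_eval]⟩

theorem IsPolynomialMap.comp {g : (τ → R) → υ → R} {f : (σ → R) → τ → R}
    (hg : IsPolynomialMap g) (hf : IsPolynomialMap f) : IsPolynomialMap (g ∘ f) := by
  intro i
  obtain ⟨p, hp⟩ := mem_mvPolynomialFunctions_iff.1 (hg i)
  have : (fun v => (g ∘ f) v i) = aeval (fun j v => f v j) p := by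
    ext v; rw [aeval_apply_eq_eval, Function.comp_apply, ← congrFun hp, aeval_apply_eq_eval]
  have hmem : aeval (fun j v => f v j) p ∈ Algebra.adjoin R (Set.range fun j v => f v j) := by
    rw [Algebra.adjoin_range_eq_range_aeval]; exact AlgHom.mem_range_self _ p
  rw [this]
  exact Algebra.adjoin_le (Set.range_subset_iff.2 hf) hmem

theorem LinearMap.isPolynomialMap [Fintype σ] (L : (σ → R) →ₗ[R] τ → R) : IsPolynomialMap L :=
  fun i => (LinearMap.proj i ∘ₗ L).coe_mem_mvPolynomialFunctions

theorem IsPolynomialMap.sum {ι : Type*} (s : Finset ι) {f : ι → (σ → R) → τ → R}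
    (hf : ∀ k ∈ s, IsPolynomialMap (f k)) : IsPolynomialMap (∑ k ∈ s, f k) := by
  intro i
  simpa only [sum_fn] using sum_mem fun k hk => hf k hk i

end PolynomialMaps

section EquivariantAverage

variable {R G V : Type*} [CommSemiring R] [Group G] [Fintype G] [AddCommMonoid V] [Module R V]

def Representation.equivariantAverage (ρ : Representation R G V) (h : V → V) (v : V) : V :=
  ∑ g, ρ g⁻¹ (h (ρ g v))

variable (ρ : Representation R G V)

theorem Representation.equivariantAverage_equivariant (h : V → V) (g : G) (v : V) :
    ρ.equivariantAverage h (ρ g v) = ρ g (ρ.equivariantAverage h v) := by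
  simp only [equivariantAverage, map_sum]
  refine Fintype.sum_equiv (Equiv.mulRight g) _ _ fun γ => ?_
  simp [← Module.End.mul_apply, ← map_mul]

theorem Representation.equivariantAverage_eq_zero {h : V → V} {v : V}
    (hv : ∀ g, h (ρ g v) = 0) : ρ.equivariantAverage h v = 0 :=
  sum_eq_zero fun g _ => by rw [hv, map_zero]

end EquivariantAverage

theorem Representation.isPolynomialMap_equivariantAverage {R G σ : Type*} [CommRing R] [Group G]
    [Fintype G] [Fintype σ] (ρ : Representation R G (σ → R)) {h : (σ → R) → σ → R}
    (hh : IsPolynomialMap h) : IsPolynomialMap (ρ.equivariantAverage h) := by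
  have : ρ.equivariantAverage h = ∑ g, ρ g⁻¹ ∘ h ∘ ρ g := by
    ext v; simp [equivariantAverage]
  rw [this]
  exact IsPolynomialMap.sum (f := fun g => ρ g⁻¹ ∘ h ∘ ρ g) _ fun g _ =>
    (ρ g⁻¹).isPolynomialMap.comp (hh.comp (ρ g).isPolynomialMap)

section Derivative

variable {𝕜 G V : Type*} [NontriviallyNormedField 𝕜] [CompleteSpace 𝕜] [Group G] [Fintype G]
  [NormedAddCommGroup V] [NormedSpace 𝕜 V] [FiniteDimensional 𝕜 V] (ρ : Representation 𝕜 G V)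

theorem Representation.hasFDerivAt_equivariantAverage {h : V → V} {D : G → V →L[𝕜] V} {x : V}
    (hD : ∀ g, HasFDerivAt h (D g) (ρ g x)) :
    HasFDerivAt (ρ.equivariantAverage h)
      (∑ g, LinearMap.toContinuousLinearMap (ρ g⁻¹) ∘L D g ∘L
        LinearMap.toContinuousLinearMap (ρ g)) x :=
  HasFDerivAt.fun_sum fun g _ => (LinearMap.toContinuousLinearMap (ρ g⁻¹)).hasFDerivAt.comp x
    ((hD g).comp x (LinearMap.toContinuousLinearMap (ρ g)).hasFDerivAt)

theorem Representation.hasFDerivAt_equivariantAverage_of_smul_id {h : V → V} {x : V} {a : 𝕜}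
    (hx : HasFDerivAt h (a • ContinuousLinearMap.id 𝕜 V) x)
    (horbit : ∀ g, ρ g x ≠ x → HasFDerivAt h (0 : V →L[𝕜] V) (ρ g x)) :
    HasFDerivAt (ρ.equivariantAverage h)
      ((Nat.card {g // ρ g x = x} * a) • ContinuousLinearMap.id 𝕜 V) x := by
  classical
  let D : G → V →L[𝕜] V := fun g => if ρ g x = x then a • ContinuousLinearMap.id 𝕜 V else 0
  have hD : ∀ g, HasFDerivAt h (D g) (ρ g x) := fun g => by
    by_cases hg : ρ g x = x
    · simpa [D, hg] using hx
    · simpa [D, hg] using horbit g hg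
  have hconj : ∀ g, LinearMap.toContinuousLinearMap (ρ g⁻¹) ∘L D g ∘L
      LinearMap.toContinuousLinearMap (ρ g) = D g := fun g => by
    ext v; by_cases hg : ρ g x = x <;> simp [D, hg, ← Module.End.mul_apply, ← map_mul]
  convert ρ.hasFDerivAt_equivariantAverage hD using 1
  simp only [hconj, D, sum_ite, sum_const_zero, add_zero, sum_const, Nat.card_eq_fintype_card,
    Fintype.card_subtype, mul_smul, Nat.cast_smul_eq_nsmul]

end Derivative

section LocalStableField

variable {σ : Type*} [Fintype σ]

def sqDist (y v : σ → ℝ) : ℝ := ∑ k, (v k - y k) ^ 2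

theorem sqDist_pos {y v : σ → ℝ} (h : v ≠ y) : 0 < sqDist y v := by
  obtain ⟨k, hk⟩ := Function.ne_iff.1 h
  exact sum_pos' (fun _ _ => sq_nonneg _) ⟨k, mem_univ k, sq_pos_of_ne_zero (sub_ne_zero.2 hk)⟩

theorem sqDist_mem_mvPolynomialFunctions (y : σ → ℝ) : sqDist y ∈ mvPolynomialFunctions ℝ σ := by
  have : sqDist y = ∑ k, ((fun v => v k) - fun _ => y k) ^ 2 := by ext v; simp [sqDist]
  rw [this]
  exact sum_mem fun k _ => pow_mem (sub_mem (coord_mem_mvPolynomialFunctions k)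
    (const_mem_mvPolynomialFunctions _)) 2

theorem differentiable_sqDist (y : σ → ℝ) : Differentiable ℝ (sqDist y) := by
  unfold sqDist; fun_prop

theorem hasFDerivAt_sqDist_self (y : σ → ℝ) : HasFDerivAt (sqDist y) (0 : (σ → ℝ) →L[ℝ] ℝ) y := by
  have := HasFDerivAt.fun_sum (u := univ) (A := fun k (v : σ → ℝ) => (v k - y k) ^ 2) fun k _ =>
    ((hasFDerivAt_apply (𝕜 := ℝ) k y).sub_const (y k)).pow 2
  exact this.congr_fderiv (by simp)

@[simp]
theorem sqDist_self (y : σ → ℝ) : sqDist y y = 0 := by simp [sqDist]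

theorem prod_sqDist_eq_zero_of_mem {S : Finset (σ → ℝ)} {y : σ → ℝ} (hy : y ∈ S) :
    ∏ z ∈ S, sqDist z y = 0 :=
  prod_eq_zero hy (sqDist_self y)

theorem hasFDerivAt_prod_sqDist_of_mem {S : Finset (σ → ℝ)} {y : σ → ℝ} (hy : y ∈ S) :
    HasFDerivAt (fun v => ∏ z ∈ S, sqDist z v) (0 : (σ → ℝ) →L[ℝ] ℝ) y := by
  classical
  have hrest := HasFDerivAt.finsetProd (u := S.erase y) fun z _ =>
    (differentiable_sqDist z y).hasFDerivAt
  have := (hasFDerivAt_sqDist_self y).mul hrest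
  simp only [← mul_prod_erase S _ hy]
  exact this.congr_fderiv (by simp)

def localStableField (S : Finset (σ → ℝ)) (x₀ v : σ → ℝ) : σ → ℝ :=
  -(∏ y ∈ S, sqDist y v) • (v - x₀)

variable (S : Finset (σ → ℝ)) (x₀ : σ → ℝ)

theorem localStableField_self : localStableField S x₀ x₀ = 0 := by
  simp [localStableField]

theorem localStableField_of_mem {y : σ → ℝ} (hy : y ∈ S) : localStableField S x₀ y = 0 := by
  simp [localStableField, prod_sqDist_eq_zero_of_mem hy]

theorem hasFDerivAt_localStableField_self :
    HasFDerivAt (localStableField S x₀)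
      ((-∏ y ∈ S, sqDist y x₀) • ContinuousLinearMap.id ℝ (σ → ℝ)) x₀ := by
  classical
  have hprod := HasFDerivAt.finsetProd (u := S) fun z _ => (differentiable_sqDist z x₀).hasFDerivAt
  have := hprod.neg.smul ((hasFDerivAt_id x₀).sub_const x₀)
  exact this.congr_fderiv (by ext; simp)

theorem hasFDerivAt_localStableField_of_mem {y : σ → ℝ} (hy : y ∈ S) :
    HasFDerivAt (localStableField S x₀) (0 : (σ → ℝ) →L[ℝ] σ → ℝ) y := by
  have := (hasFDerivAt_prod_sqDist_of_mem hy).neg.smul ((hasFDerivAt_id y).sub_const x₀)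
  exact this.congr_fderiv (by ext; simp [prod_sqDist_eq_zero_of_mem hy])

theorem isPolynomialMap_localStableField : IsPolynomialMap (localStableField S x₀) := fun i => by
  have : (fun v => localStableField S x₀ v i) =
      -(∏ y ∈ S, sqDist y) * ((fun v => v i) - fun _ => x₀ i) := by
    ext v; simp [localStableField]
  rw [this]
  exact mul_mem (neg_mem (prod_mem fun y _ => sqDist_mem_mvPolynomialFunctions y))
    (sub_mem (coord_mem_mvPolynomialFunctions i) (const_mem_mvPolynomialFunctions _))

end LocalStableField

theorem spectrum_map_ofReal_toMatrix'_smul_id_subset {σ : Type*} [Fintype σ] [DecidableEq σ]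
    (a : ℝ) :
    spectrum ℂ ((LinearMap.toMatrix'
      ((a • ContinuousLinearMap.id ℝ (σ → ℝ) : (σ → ℝ) →L[ℝ] σ → ℝ) : (σ → ℝ) →ₗ[ℝ] σ → ℝ)).map
        Complex.ofReal) ⊆ {(a : ℂ)} := by
  have hmat : (LinearMap.toMatrix'
      ((a • ContinuousLinearMap.id ℝ (σ → ℝ) : (σ → ℝ) →L[ℝ] σ → ℝ) : (σ → ℝ) →ₗ[ℝ] σ → ℝ)).map
        Complex.ofReal = algebraMap ℂ (Matrix σ σ ℂ) a := by
    ext i j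
    by_cases h : i = j <;> simp [Matrix.algebraMap_matrix_apply, h]
  rw [hmat]
  rcases subsingleton_or_nontrivial (Matrix σ σ ℂ) with _ | _
  · simp [spectrum.of_subsingleton]
  · rw [spectrum.scalar_eq]

theorem exists_equivariant_polynomial_field_with_stable_equilibrium_general
    (n : ℕ) (Γ : Type*) [Group Γ] [Fintype Γ]
    (ρ : Representation ℝ Γ (Fin n → ℝ)) (x₀ : Fin n → ℝ) :
    ∃ f : (Fin n → ℝ) → (Fin n → ℝ),
      (∃ p : Fin n → MvPolynomial (Fin n) ℝ,
        ∀ (v : Fin n → ℝ) (i : Fin n), f v i = MvPolynomial.eval v (p i)) ∧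
      (∀ (γ : Γ) (v : Fin n → ℝ), f (ρ γ v) = ρ γ (f v)) ∧
      f x₀ = 0 ∧
      ∃ D : (Fin n → ℝ) →L[ℝ] (Fin n → ℝ),
        HasFDerivAt f D x₀ ∧
        ∀ μ ∈ spectrum ℂ
            ((LinearMap.toMatrix' ((D : (Fin n → ℝ) →ₗ[ℝ] (Fin n → ℝ)))).map
              (Complex.ofReal : ℝ → ℂ)),
          μ.re < 0 := by
  classical
  set S := (univ.image fun γ => ρ γ x₀).erase x₀
  have horbit : ∀ γ, ρ γ x₀ ≠ x₀ → ρ γ x₀ ∈ S := fun γ hγ =>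
    mem_erase.2 ⟨hγ, mem_image_of_mem _ (mem_univ γ)⟩
  have hpos : 0 < ∏ y ∈ S, sqDist y x₀ :=
    prod_pos fun y hy => sqDist_pos (ne_of_mem_erase hy).symm
  have hstab : 0 < Nat.card {γ // ρ γ x₀ = x₀} := Nat.card_pos_iff.2 ⟨⟨⟨1, by simp⟩⟩, inferInstance⟩
  refine ⟨ρ.equivariantAverage (localStableField S x₀),
    (ρ.isPolynomialMap_equivariantAverage
      (isPolynomialMap_localStableField S x₀)).exists_mvPolynomial,
    ρ.equivariantAverage_equivariant _,
    ρ.equivariantAverage_eq_zero fun γ => ?_, _,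
    ρ.hasFDerivAt_equivariantAverage_of_smul_id (hasFDerivAt_localStableField_self S x₀)
      fun γ hγ => hasFDerivAt_localStableField_of_mem S x₀ (horbit γ hγ),
    fun μ hμ => ?_⟩
  · by_cases hγ : ρ γ x₀ = x₀
    · rw [hγ, localStableField_self]
    · exact localStableField_of_mem S x₀ (horbit γ hγ)
  · rw [Set.mem_singleton_iff.1 (spectrum_map_ofReal_toMatrix'_smul_id_subset _ hμ),
      Complex.ofReal_re]
    exact mul_neg_of_pos_of_neg (Nat.cast_pos.2 hstab) (neg_neg_of_pos hpos)

/-- For a finite cyclic group `Γ` acting linearly on `ℝⁿ` and any point `x₀ ∈ ℝⁿ`,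
there is a `Γ`-equivariant polynomial vector field `f` with `f x₀ = 0` such that
every eigenvalue of the complexification of the Jacobian `(df)_{x₀}` has strictly
negative real part (so `x₀` is a linearly stable equilibrium). -/
theorem exists_equivariant_polynomial_field_with_stable_equilibrium
    (n : ℕ) (Γ : Type*) [Group Γ] [Fintype Γ] [IsCyclic Γ]
    (ρ : Representation ℝ Γ (Fin n → ℝ)) (x₀ : Fin n → ℝ) :
    ∃ f : (Fin n → ℝ) → (Fin n → ℝ),
      (∃ p : Fin n → MvPolynomial (Fin n) ℝ,
        ∀ (v : Fin n → ℝ) (i : Fin n), f v i = MvPolynomial.eval v (p i)) ∧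
      (∀ (γ : Γ) (v : Fin n → ℝ), f (ρ γ v) = ρ γ (f v)) ∧
      f x₀ = 0 ∧
      ∃ D : (Fin n → ℝ) →L[ℝ] (Fin n → ℝ),
        HasFDerivAt f D x₀ ∧
        ∀ μ ∈ spectrum ℂ
            ((LinearMap.toMatrix' ((D : (Fin n → ℝ) →ₗ[ℝ] (Fin n → ℝ)))).map
              (Complex.ofReal : ℝ → ℂ)),
          μ.re < 0 :=
  exists_equivariant_polynomial_field_with_stable_equilibrium_general n Γ ρ x₀
end
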